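/- arXiv:1210.4126 — 3 statements merged into one kernel-verified Lean document; each statement's English description precedes it below -/
import Mathlib

section
/- There is a constant c > 0 such that: for any b ∈ ℝ, any measurable f: ℝⁿ → [0,1] supported on the half-space {x₁ ≤ b}, and any t > 0, one has E[(Pₜf)(X)·1_{X₁ ≥ e^{-t}b}] ≤ max{ (1/2)Ef - c(Ef)²/√(e^{2t}-1), (3/8)Ef }, where X ~ γₙ. -/
open MeasureTheory Real ProbabilityTheory

noncomputable section

/-- The standard Gaussian measure on ℝⁿ. -/
def stdGaussian (n : ℕ) : Measure (Fin n → ℝ) := Measure.pi fun _ => gaussianReal 0 1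

/-- The Ornstein–Uhlenbeck semigroup Pₜ. -/
def OU (n : ℕ) (t : ℝ) (f : (Fin n → ℝ) → ℝ) (x : Fin n → ℝ) : ℝ :=
  ∫ y, f (fun i => Real.exp (-t) * x i + Real.sqrt (1 - Real.exp (-2 * t)) * y i)
    ∂(stdGaussian n)

open Set
open scoped ENNReal NNReal

local notation "γ" => gaussianReal 0 1

lemma gauss_prod_eq_withDensity :
    ((γ).prod (γ)) = (volume : Measure (ℝ × ℝ)).withDensity
      (fun p => gaussianPDF 0 1 p.1 * gaussianPDF 0 1 p.2) := by
  refine (Measure.prod_eq fun s t hs ht => ?_)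
  rw [withDensity_apply _ (hs.prod ht), Measure.volume_eq_prod, ← Measure.prod_restrict,
    lintegral_prod_mul (measurable_gaussianPDF 0 1).aemeasurable
      (measurable_gaussianPDF 0 1).aemeasurable,
    gaussianReal_apply _ one_ne_zero, gaussianReal_apply _ one_ne_zero]


variable {a s : ℝ}

/-- The rotation on `ℝ × ℝ` as a linear equiv. -/
def rotL (a s : ℝ) (h : a ^ 2 + s ^ 2 = 1) : (ℝ × ℝ) ≃ₗ[ℝ] (ℝ × ℝ) where
  toFun p := (a * p.1 + s * p.2, -s * p.1 + a * p.2)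
  invFun p := (a * p.1 - s * p.2, s * p.1 + a * p.2)
  map_add' p q := by simp; constructor <;> ring
  map_smul' c p := by simp; constructor <;> ring
  left_inv p := by
    simp only
    ext <;> simp <;> [linear_combination p.1 * h; linear_combination p.2 * h]
  right_inv p := by
    simp only
    ext <;> simp <;> [linear_combination p.1 * h; linear_combination p.2 * h]

lemma rotL_det (h : a ^ 2 + s ^ 2 = 1) :
    LinearMap.det ((rotL a s h : (ℝ × ℝ) ≃ₗ[ℝ] (ℝ × ℝ)) : (ℝ × ℝ) →ₗ[ℝ] (ℝ × ℝ)) = 1 := by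
  rw [← LinearMap.det_toMatrix (Module.Basis.finTwoProd ℝ), Matrix.det_fin_two]
  simp [LinearMap.toMatrix_apply, Module.Basis.finTwoProd_zero, Module.Basis.finTwoProd_one, rotL]
  nlinarith [h]

lemma map_withDensity_equiv {α β : Type*} [MeasurableSpace α] [MeasurableSpace β]
    (e : α ≃ᵐ β) (μ : Measure α) (D : β → ℝ≥0∞) (hD : Measurable D) :
    Measure.map e (μ.withDensity (D ∘ e)) = (Measure.map e μ).withDensity D := by
  ext s hs
  rw [Measure.map_apply e.measurable hs, withDensity_apply _ hs,
    withDensity_apply _ (e.measurable hs),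
    setLIntegral_map hs hD e.measurable]
  rfl

/-- Rotation as a measurable equiv. -/
def rotE (a s : ℝ) (h : a ^ 2 + s ^ 2 = 1) : (ℝ × ℝ) ≃ᵐ (ℝ × ℝ) where
  toEquiv := (rotL a s h).toEquiv
  measurable_toFun := by
    have : Continuous (rotL a s h : (ℝ × ℝ) →ₗ[ℝ] (ℝ × ℝ)) :=
      LinearMap.continuous_of_finiteDimensional _
    exact this.measurable
  measurable_invFun := by
    have : Continuous ((rotL a s h).symm : (ℝ × ℝ) →ₗ[ℝ] (ℝ × ℝ)) :=
      LinearMap.continuous_of_finiteDimensional _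
    exact this.measurable

lemma gaussianPDF_rot (h : a ^ 2 + s ^ 2 = 1) (p : ℝ × ℝ) :
    gaussianPDF 0 1 ((rotE a s h).symm p).1 * gaussianPDF 0 1 ((rotE a s h).symm p).2
      = gaussianPDF 0 1 p.1 * gaussianPDF 0 1 p.2 := by
  have key : ∀ x y : ℝ, gaussianPDF 0 1 x * gaussianPDF 0 1 y
      = ENNReal.ofReal ((Real.sqrt (2 * π))⁻¹ * (Real.sqrt (2 * π))⁻¹
        * Real.exp (-(x ^ 2 + y ^ 2) / 2)) := by
    intro x y
    rw [gaussianPDF, gaussianPDF, ← ENNReal.ofReal_mul (gaussianPDFReal_nonneg _ _ _)]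
    congr 1
    simp only [gaussianPDFReal]
    push_cast
    rw [show -(x ^ 2 + y ^ 2) / 2 = -(x - 0) ^ 2 / (2*1) + -(y - 0) ^ 2 / (2*1) by ring,
      Real.exp_add]
    ring_nf
  rw [key, key]
  have hsq : ((rotE a s h).symm p).1 ^ 2 + ((rotE a s h).symm p).2 ^ 2 = p.1 ^ 2 + p.2 ^ 2 := by
    show (a * p.1 - s * p.2) ^ 2 + (s * p.1 + a * p.2) ^ 2 = _
    linear_combination (p.1 ^ 2 + p.2 ^ 2) * h
  rw [hsq]

lemma rot2_measurePreserving (h : a ^ 2 + s ^ 2 = 1) :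
    MeasurePreserving (rotE a s h) ((γ).prod (γ)) ((γ).prod (γ)) := by
  constructor
  · exact (rotE a s h).measurable
  · have hvol : Measure.map (rotE a s h) (volume : Measure (ℝ × ℝ)) = volume := by
      have := Measure.map_linearMap_addHaar_eq_smul_addHaar (volume : Measure (ℝ × ℝ))
        (f := ((rotL a s h : (ℝ × ℝ) ≃ₗ[ℝ] (ℝ × ℝ)) : (ℝ × ℝ) →ₗ[ℝ] (ℝ × ℝ)))
        (by rw [rotL_det h]; norm_num)
      rw [rotL_det h] at this
      simp at this; exact this
    have hD : Measurable (fun p : ℝ × ℝ => gaussianPDF 0 1 p.1 * gaussianPDF 0 1 p.2) :=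
      ((measurable_gaussianPDF 0 1).comp measurable_fst).mul
        ((measurable_gaussianPDF 0 1).comp measurable_snd)
    rw [gauss_prod_eq_withDensity]
    have hcomp : (fun p : ℝ × ℝ => gaussianPDF 0 1 p.1 * gaussianPDF 0 1 p.2)
        = (fun p : ℝ × ℝ => gaussianPDF 0 1 p.1 * gaussianPDF 0 1 p.2) ∘ (rotE a s h) := by
      funext p
      have := gaussianPDF_rot h ((rotE a s h) p)
      simp only [Function.comp_apply]
      rw [← this, MeasurableEquiv.symm_apply_apply]
    conv_lhs => rw [hcomp]
    rw [map_withDensity_equiv (rotE a s h) _ _ hD, hvol]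

instance (n : ℕ) : IsProbabilityMeasure (stdGaussian n) := by
  unfold _root_.stdGaussian; infer_instance

lemma pi_map_measurePreserving {m : ℕ} {α : Type*} [MeasurableSpace α] (μ : Measure α)
    [IsProbabilityMeasure μ] {r : α → α} (hr : MeasurePreserving r μ μ) :
    MeasurePreserving (fun x : Fin m → α => fun i => r (x i))
      (Measure.pi fun _ => μ) (Measure.pi fun _ => μ) := by
  have hmeas : Measurable (fun x : Fin m → α => fun i => r (x i)) :=
    measurable_pi_lambda _ fun i => hr.measurable.comp (measurable_pi_apply i)
  constructor
  · exact hmeas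
  · refine (Measure.pi_eq fun s hs => ?_).symm
    rw [Measure.map_apply hmeas (MeasurableSet.univ_pi hs)]
    have : (fun x : Fin m → α => fun i => r (x i)) ⁻¹' (univ.pi s)
        = univ.pi fun i => r ⁻¹' (s i) := by
      ext x; simp
    rw [this, Measure.pi_pi]
    exact Finset.prod_congr rfl fun i _ => hr.measure_preimage (hs i).nullMeasurableSet

/-- The joint rotation on pairs of vectors. -/
lemma rotPair_measurePreserving {m : ℕ} (h : a ^ 2 + s ^ 2 = 1) :
    MeasurePreserving
      (fun p : (Fin m → ℝ) × (Fin m → ℝ) =>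
        ((fun i => a * p.1 i + s * p.2 i, fun i => -s * p.1 i + a * p.2 i) :
          (Fin m → ℝ) × (Fin m → ℝ)))
      ((stdGaussian m).prod (stdGaussian m)) ((stdGaussian m).prod (stdGaussian m)) := by
  have e := MeasureTheory.measurePreserving_arrowProdEquivProdArrow ℝ ℝ (Fin m)
    (fun _ => γ) (fun _ => γ)
  have hpi := pi_map_measurePreserving (m := m) ((γ).prod (γ)) (rot2_measurePreserving h)
  have key := (e.comp (hpi.comp e.symm)).comp (MeasurePreserving.id _)
  -- key : MeasurePreserving (e ∘ pi-map ∘ e.symm)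
  have : (⇑(MeasurableEquiv.arrowProdEquivProdArrow ℝ ℝ (Fin m)) ∘
      (fun x : Fin m → ℝ × ℝ => fun i => (rotE a s h) (x i)) ∘
      ⇑(MeasurableEquiv.arrowProdEquivProdArrow ℝ ℝ (Fin m)).symm) =
      (fun p : (Fin m → ℝ) × (Fin m → ℝ) =>
        ((fun i => a * p.1 i + s * p.2 i, fun i => -s * p.1 i + a * p.2 i) :
          (Fin m → ℝ) × (Fin m → ℝ))) := by
    funext p
    simp only [Function.comp_apply]
    rfl
  rw [this] at key
  simpa [_root_.stdGaussian] using key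

lemma stdGaussian_eval0 {n : ℕ} {A : Set ℝ} (hA : MeasurableSet A) :
    stdGaussian (n + 1) {x | x 0 ∈ A} = γ A := by
  have : {x : Fin (n + 1) → ℝ | x 0 ∈ A} = Function.eval 0 ⁻¹' A := rfl
  rw [this, Set.eval_preimage, _root_.stdGaussian, Measure.pi_pi]
  rw [Finset.prod_eq_single 0]
  · simp
  · intro j _ hj
    simp [Function.update_of_ne hj]
  · simp

/-- The standard normal CDF. -/
def Phi (c : ℝ) : ℝ := (γ (Iic c)).toReal

lemma Phi_nonneg (c : ℝ) : 0 ≤ Phi c := ENNReal.toReal_nonneg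

lemma Phi_mono : Monotone Phi := by
  intro c d hcd
  exact ENNReal.toReal_mono (measure_ne_top _ _) (measure_mono (Iic_subset_Iic.2 hcd))

lemma Phi_measurable : Measurable Phi := Phi_mono.measurable

lemma Phi_zero : Phi 0 = 1 / 2 := by
  have hmap : Measure.map (fun x : ℝ => (-1 : ℝ) * x) (γ) = γ := by
    simpa using gaussianReal_map_const_mul (μ := 0) (v := 1) (-1 : ℝ)
  have h1 : (γ) (Ioi (0:ℝ)) = (γ) (Iio (0:ℝ)) := by
    conv_lhs => rw [← hmap]
    rw [Measure.map_apply (by fun_prop) measurableSet_Ioi]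
    congr 1
    ext x
    simp
  have h0 : (γ) {(0:ℝ)} = 0 := gaussianReal_absolutelyContinuous 0 one_ne_zero (by simp)
  have hIio : (γ) (Iio (0:ℝ)) = (γ) (Iic (0:ℝ)) := by
    rw [← Iio_union_right, measure_union (by simp) (measurableSet_singleton 0), h0, add_zero]
  have hsplit : (γ) (Iic (0:ℝ)) + (γ) (Ioi (0:ℝ)) = 1 := by
    rw [← measure_union (Iic_disjoint_Ioi le_rfl) measurableSet_Ioi, Iic_union_Ioi,
      measure_univ]
  rw [h1, hIio] at hsplit
  rw [← two_mul] at hsplit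
  have : (γ) (Iic (0:ℝ)) = 2⁻¹ := by
    calc (γ) (Iic (0:ℝ)) = 2⁻¹ * (2 * (γ) (Iic 0)) := by
          rw [← mul_assoc, ENNReal.inv_mul_cancel (by norm_num) (by norm_num), one_mul]
      _ = 2⁻¹ := by rw [hsplit, mul_one]
  rw [Phi, this]
  simp

/-- The value of the standard normal density at `1`. -/
def gaussConst : ℝ := Real.exp (-(1/2 : ℝ)) / Real.sqrt (2 * π)

lemma gaussConst_pos : 0 < gaussConst :=
  div_pos (Real.exp_pos _) (Real.sqrt_pos.2 (by positivity))

lemma gaussianPDFReal_std (x : ℝ) :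
    gaussianPDFReal 0 1 x = (Real.sqrt (2 * π))⁻¹ * Real.exp (-(x ^ 2) / 2) := by
  simp [gaussianPDFReal]

lemma gauss_Ioc_toReal (u v : ℝ) :
    ((γ) (Ioc u v)).toReal = ∫ x in Ioc u v, gaussianPDFReal 0 1 x := by
  rw [gaussianReal_apply_eq_integral 0 one_ne_zero _,
    ENNReal.toReal_ofReal (setIntegral_nonneg measurableSet_Ioc
      fun x _ => gaussianPDFReal_nonneg 0 1 x)]

lemma gauss_Ioc_le {u v : ℝ} (h : u ≤ v) :
    ((γ) (Ioc u v)).toReal ≤ (v - u) * (Real.sqrt (2 * π))⁻¹ := by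
  rw [gauss_Ioc_toReal]
  have hle : ∫ x in Ioc u v, gaussianPDFReal 0 1 x
      ≤ ∫ _x in Ioc u v, (Real.sqrt (2 * π))⁻¹ := by
    refine setIntegral_mono_on ((integrable_gaussianPDFReal 0 1).integrableOn)
      (integrableOn_const measure_Ioc_lt_top.ne) measurableSet_Ioc ?_
    intro x _
    rw [gaussianPDFReal_std]
    have : Real.exp (-(x ^ 2) / 2) ≤ 1 := by
      rw [← Real.exp_zero]
      exact Real.exp_le_exp.2 (by nlinarith [sq_nonneg x])
    nlinarith [inv_nonneg.2 (Real.sqrt_nonneg (2 * π))]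
  calc _ ≤ _ := hle
    _ = (v - u) * (Real.sqrt (2 * π))⁻¹ := by
        rw [setIntegral_const, measureReal_def, Real.volume_Ioc, smul_eq_mul,
          ENNReal.toReal_ofReal (by linarith)]

lemma gauss_Ioc_ge {l : ℝ} (hl1 : -1 ≤ l) (hl0 : l ≤ 0) :
    gaussConst * (-l) ≤ ((γ) (Ioc l 0)).toReal := by
  rw [gauss_Ioc_toReal]
  have hle : ∫ _x in Ioc l (0:ℝ), gaussConst ≤ ∫ x in Ioc l (0:ℝ), gaussianPDFReal 0 1 x := by
    refine setIntegral_mono_on (integrableOn_const measure_Ioc_lt_top.ne)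
      ((integrable_gaussianPDFReal 0 1).integrableOn) measurableSet_Ioc ?_
    intro x hx
    rw [gaussianPDFReal_std, gaussConst, div_eq_inv_mul]
    have hx2 : x ^ 2 ≤ 1 := by
      rcases hx with ⟨h1, h2⟩
      nlinarith
    have : Real.exp (-(1/2 : ℝ)) ≤ Real.exp (-(x ^ 2) / 2) :=
      Real.exp_le_exp.2 (by linarith)
    nlinarith [inv_nonneg.2 (Real.sqrt_nonneg (2 * π))]
  calc gaussConst * (-l) = ∫ _x in Ioc l (0:ℝ), gaussConst := by
        rw [setIntegral_const, measureReal_def, Real.volume_Ioc, smul_eq_mul,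
          ENNReal.toReal_ofReal (by linarith)]
        ring
    _ ≤ _ := hle

lemma Phi_le_of_nonpos {c : ℝ} (hc : c ≤ 0) :
    Phi c ≤ 1 / 2 - gaussConst * min (-c) 1 := by
  have hsplit : (γ) (Iic (0:ℝ)) = (γ) (Iic c) + (γ) (Ioc c 0) := by
    rw [← measure_union (Iic_disjoint_Ioc le_rfl) measurableSet_Ioc, Iic_union_Ioc_eq_Iic hc]
  have htr : Phi 0 = Phi c + ((γ) (Ioc c 0)).toReal := by
    rw [Phi, Phi, hsplit, ENNReal.toReal_add (measure_ne_top _ _) (measure_ne_top _ _)]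
  set l := max c (-1) with hl
  have hsub : Ioc l 0 ⊆ Ioc c 0 := Ioc_subset_Ioc (le_max_left _ _) le_rfl
  have hmono : ((γ) (Ioc l 0)).toReal ≤ ((γ) (Ioc c 0)).toReal :=
    ENNReal.toReal_mono (measure_ne_top _ _) (measure_mono hsub)
  have hge : gaussConst * (-l) ≤ ((γ) (Ioc l 0)).toReal :=
    gauss_Ioc_ge (le_max_right _ _) (max_le hc (by norm_num))
  have hminl : -l = min (-c) 1 := by
    rw [hl]
    rcases le_total c (-1) with h | h
    · rw [max_eq_right h, min_eq_right (by linarith)]; norm_num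
    · rw [max_eq_left h, min_eq_left (by linarith)]
  rw [hminl] at hge
  have := Phi_zero
  linarith

lemma integrable_of_bound {α : Type*} [MeasurableSpace α] (μ : Measure α) [IsFiniteMeasure μ]
    {g : α → ℝ} (hg : Measurable g) (C : ℝ) (h : ∀ x, |g x| ≤ C) : Integrable g μ :=
  (integrable_const C).mono' hg.aestronglyMeasurable (ae_of_all _ h)

lemma duality {n : ℕ} (b t : ℝ) (ht : 0 < t) (f : (Fin (n + 1) → ℝ) → ℝ)
    (hf : Measurable f) (hf01 : ∀ x, f x ∈ Icc (0:ℝ) 1) :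
    ∫ x in {x : Fin (n + 1) → ℝ | Real.exp (-t) * b ≤ x 0},
        OU (n + 1) t f x ∂(stdGaussian (n + 1))
      = ∫ u, f u * Phi (Real.exp (-t) * (u 0 - b) / Real.sqrt (1 - Real.exp (-2 * t)))
          ∂(stdGaussian (n + 1)) := by
  set P := stdGaussian (n + 1) with hP
  set a := Real.exp (-t) with haa
  set s := Real.sqrt (1 - Real.exp (-2 * t)) with hss
  have ha0 : 0 < a := Real.exp_pos _
  have hexp2 : Real.exp (-2 * t) = a ^ 2 := by
    rw [haa, pow_two, ← Real.exp_add]; ring_nf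
  have ha1 : a < 1 := by
    rw [haa, Real.exp_lt_one_iff]; linarith
  have hs0 : 0 < s := by
    rw [hss]
    apply Real.sqrt_pos.2
    rw [hexp2]; nlinarith
  have h1 : a ^ 2 + s ^ 2 = 1 := by
    rw [hss, sq_sqrt (by rw [hexp2]; nlinarith), hexp2]; ring
  set S : Set (Fin (n + 1) → ℝ) := {x | a * b ≤ x 0} with hSS
  have hS : MeasurableSet S := measurableSet_le measurable_const (measurable_pi_apply 0)
  set χ : (Fin (n + 1) → ℝ) → ℝ := S.indicator (fun _ => (1:ℝ)) with hχ
  have hχm : Measurable χ := measurable_const.indicator hS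
  have hχ01 : ∀ x, χ x = 0 ∨ χ x = 1 := by
    intro x
    by_cases h : x ∈ S
    · right; simp [hχ, h]
    · left; simp [hχ, h]
  have hχb : ∀ x, |χ x| ≤ 1 := by
    intro x; rcases hχ01 x with h | h <;> rw [h] <;> norm_num
  have hfb : ∀ x, |f x| ≤ 1 := by
    intro x; rcases hf01 x with ⟨h0, h1⟩; rw [abs_of_nonneg h0]; exact h1
  have hmap : Measurable (fun p : (Fin (n + 1) → ℝ) × (Fin (n + 1) → ℝ) => fun i => a * p.1 i + s * p.2 i) :=
    measurable_pi_lambda _ fun i => by fun_prop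
  set F : (Fin (n + 1) → ℝ) × (Fin (n + 1) → ℝ) → ℝ :=
    fun p => χ p.1 * f (fun i => a * p.1 i + s * p.2 i) with hF
  have hFm : Measurable F := (hχm.comp measurable_fst).mul (hf.comp hmap)
  have hFb : ∀ p, |F p| ≤ 1 := by
    intro p
    rw [hF, abs_mul]
    calc |χ p.1| * |f _| ≤ 1 * 1 := mul_le_mul (hχb _) (hfb _) (abs_nonneg _) zero_le_one
      _ = 1 := mul_one 1
  have hFint : Integrable F (P.prod P) := integrable_of_bound _ hFm 1 hFb
  -- Step 1: write the LHS as a double integral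
  have step1 : ∫ x in S, OU (n + 1) t f x ∂P = ∫ p, F p ∂(P.prod P) := by
    rw [← integral_indicator hS]
    rw [integral_prod F hFint]
    congr 1
    funext x
    by_cases hx : x ∈ S
    · rw [Set.indicator_of_mem hx, OU]
      simp only [← haa, ← hss]
      congr 1
      funext y
      simp only [hF, hχ, Set.indicator_of_mem hx, one_mul]
    · rw [Set.indicator_of_notMem hx]
      simp only [hF, hχ, Set.indicator_of_notMem hx, zero_mul, integral_zero]
  -- Step 2: rotate
  have hrot := rotPair_measurePreserving (m := n + 1) (a := a) (s := -s)
    (by rw [neg_pow]; simpa using h1)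
  have step2 : ∫ p, F p ∂(P.prod P)
      = ∫ p : (Fin (n + 1) → ℝ) × (Fin (n + 1) → ℝ),
          χ (fun i => a * p.1 i - s * p.2 i) * f p.1 ∂(P.prod P) := by
    conv_lhs => rw [← hrot.map_eq]
    rw [integral_map hrot.measurable.aemeasurable hFm.aestronglyMeasurable]
    congr 1
    funext p
    rw [hF]
    simp only
    congr 1
    · congr 1
      funext i
      ring
    · congr 1
      funext i
      have : -(-s) * p.1 i + a * p.2 i = s * p.1 i + a * p.2 i := by ring
      rw [this]
      linear_combination p.1 i * h1
  -- Step 3: Fubini and the marginal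
  have hGm : Measurable (fun p : (Fin (n + 1) → ℝ) × (Fin (n + 1) → ℝ) =>
      χ (fun i => a * p.1 i - s * p.2 i) * f p.1) := by
    have hmap2 : Measurable (fun p : (Fin (n + 1) → ℝ) × (Fin (n + 1) → ℝ) => fun i => a * p.1 i - s * p.2 i) :=
      measurable_pi_lambda _ fun i => by fun_prop
    exact (hχm.comp hmap2).mul (hf.comp measurable_fst)
  have hGint : Integrable (fun p : (Fin (n + 1) → ℝ) × (Fin (n + 1) → ℝ) =>
      χ (fun i => a * p.1 i - s * p.2 i) * f p.1) (P.prod P) := by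
    refine integrable_of_bound _ hGm 1 ?_
    intro p
    rw [abs_mul]
    calc |χ _| * |f _| ≤ 1 * 1 := mul_le_mul (hχb _) (hfb _) (abs_nonneg _) zero_le_one
      _ = 1 := mul_one 1
  have step3 : ∫ p : (Fin (n + 1) → ℝ) × (Fin (n + 1) → ℝ),
      χ (fun i => a * p.1 i - s * p.2 i) * f p.1 ∂(P.prod P)
      = ∫ u, f u * Phi (a * (u 0 - b) / s) ∂P := by
    rw [integral_prod _ hGint]
    congr 1
    funext u
    have hind : ∀ v : Fin (n + 1) → ℝ, χ (fun i => a * u i - s * v i)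
        = ({v : Fin (n + 1) → ℝ | v 0 ∈ Iic (a * (u 0 - b) / s)}).indicator (fun _ => (1:ℝ)) v := by
      intro v
      rw [hχ]
      by_cases h : a * b ≤ a * u 0 - s * v 0
      · rw [Set.indicator_of_mem (by exact h), Set.indicator_of_mem]
        simp only [mem_setOf_eq, mem_Iic]
        rw [le_div_iff₀ hs0]
        nlinarith
      · rw [Set.indicator_of_notMem (by exact h), Set.indicator_of_notMem]
        simp only [mem_setOf_eq, mem_Iic]
        rw [le_div_iff₀ hs0]
        intro hcon
        apply h
        nlinarith
    calc ∫ v, χ (fun i => a * u i - s * v i) * f u ∂P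
        = ∫ v, f u * ({v : Fin (n + 1) → ℝ | v 0 ∈ Iic (a * (u 0 - b) / s)}).indicator
            (fun _ => (1:ℝ)) v ∂P := by
          congr 1; funext v; rw [hind v]; ring
      _ = f u * ∫ v, ({v : Fin (n + 1) → ℝ | v 0 ∈ Iic (a * (u 0 - b) / s)}).indicator
            (fun _ => (1:ℝ)) v ∂P := integral_const_mul _ _
      _ = f u * Phi (a * (u 0 - b) / s) := by
          rw [show ({v : Fin (n + 1) → ℝ | v 0 ∈ Iic (a * (u 0 - b) / s)}).indicator
              (fun _ => (1:ℝ)) = ({v : Fin (n + 1) → ℝ | v 0 ∈ Iic (a * (u 0 - b) / s)}).indicator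
              (1 : (Fin (n + 1) → ℝ) → ℝ) from rfl]
          rw [integral_indicator_one (show MeasurableSet
            {v : Fin (n + 1) → ℝ | v 0 ∈ Iic (a * (u 0 - b) / s)} from
            measurable_pi_apply 0 measurableSet_Iic)]
          rw [measureReal_def, hP, stdGaussian_eval0 measurableSet_Iic, Phi]
  rw [step1, step2, step3]

lemma Phi_le_one (c : ℝ) : Phi c ≤ 1 := by
  rw [Phi]
  have h := prob_le_one (μ := γ) (s := Iic c)
  calc ((γ) (Iic c)).toReal ≤ (1 : ℝ≥0∞).toReal :=
        ENNReal.toReal_mono ENNReal.one_ne_top h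
    _ = 1 := by simp

lemma exp_half_bounds : Real.exp (-(1/2 : ℝ)) ≥ 5/12 ∧ Real.exp (-(1/2 : ℝ)) ≥ 0.6065 := by
  have hsq : Real.exp (1/2 : ℝ) * Real.exp (1/2 : ℝ) = Real.exp 1 := by
    rw [← Real.exp_add]; norm_num
  have he := Real.exp_one_lt_d9
  have hp := Real.exp_pos (1/2 : ℝ)
  have hup : Real.exp (1/2 : ℝ) < 1.64873 := by nlinarith
  have hinv : Real.exp (-(1/2 : ℝ)) * Real.exp (1/2 : ℝ) = 1 := by
    rw [← Real.exp_add]; norm_num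
  constructor <;> nlinarith

lemma sqrt_two_pi_bounds : Real.sqrt (2 * π) ≤ 2.51 ∧ (0:ℝ) < Real.sqrt (2 * π) := by
  constructor
  · rw [show (2.51 : ℝ) = Real.sqrt (2.51 ^ 2) by rw [Real.sqrt_sq]; norm_num]
    exact Real.sqrt_le_sqrt (by nlinarith [Real.pi_lt_d2])
  · exact Real.sqrt_pos.2 (by positivity)

lemma gaussConst_ge : gaussConst ≥ 5/24 := by
  have h1 := exp_half_bounds
  have h2 := sqrt_two_pi_bounds
  rw [gaussConst, ge_iff_le, le_div_iff₀ h2.2]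
  nlinarith [h1.2, h2.1, h2.2]

set_option maxHeartbeats 1000000 in
/-- there is c > 0 such that for any f : ℝⁿ → [0,1] supported on
the half-space {x₁ ≤ b} and any t > 0,
E[(Pₜf)·1_{x₁ ≥ e^{-t}b}] ≤ max{ (1/2)Ef - c(Ef)²/√(e^{2t}-1), (3/8)Ef }. -/
theorem time_reversal_mass_bound :
    ∃ c : ℝ, 0 < c ∧
      ∀ (n : ℕ) (b : ℝ) (f : (Fin (n + 1) → ℝ) → ℝ), Measurable f →
        (∀ x, f x ∈ Set.Icc (0 : ℝ) 1) →
        (∀ x, b < x 0 → f x = 0) →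
        ∀ t : ℝ, 0 < t →
          (∫ x in {x : Fin (n + 1) → ℝ | Real.exp (-t) * b ≤ x 0},
              OU (n + 1) t f x ∂(stdGaussian (n + 1)))
            ≤ max
              ((1 / 2) * (∫ x, f x ∂(stdGaussian (n + 1)))
                - c * (∫ x, f x ∂(stdGaussian (n + 1))) ^ 2
                    / Real.sqrt (Real.exp (2 * t) - 1))
              ((3 / 8) * ∫ x, f x ∂(stdGaussian (n + 1))) := by
  refine ⟨1/10, by norm_num, ?_⟩
  intro n b f hf hf01 hsupp t ht
  set P := stdGaussian (n + 1) with hPdef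
  set E := ∫ x, f x ∂P with hE
  have hE0 : 0 ≤ E := integral_nonneg fun x => (hf01 x).1
  set σ := Real.sqrt (Real.exp (2 * t) - 1) with hσdef
  have hσ0 : 0 < σ := Real.sqrt_pos.2 (by
    have : (1:ℝ) < Real.exp (2 * t) := by
      rw [show (1:ℝ) = Real.exp 0 by simp]
      exact Real.exp_lt_exp.2 (by linarith)
    linarith)
  set a := Real.exp (-t) with haa
  set s := Real.sqrt (1 - Real.exp (-2 * t)) with hss
  have ha0 : 0 < a := Real.exp_pos _
  have hexp2 : Real.exp (-2 * t) = a ^ 2 := by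
    rw [haa, pow_two, ← Real.exp_add]; ring_nf
  have hsσ : s = σ * a := by
    rw [hss, hσdef, haa]
    rw [show Real.exp (-t) = Real.sqrt (Real.exp (-t) ^ 2) by
      rw [Real.sqrt_sq (Real.exp_pos _).le]]
    rw [← Real.sqrt_mul (by
      have : (1:ℝ) ≤ Real.exp (2 * t) := by
        rw [show (1:ℝ) = Real.exp 0 by simp]
        exact Real.exp_le_exp.2 (by linarith)
      linarith)]
    congr 1
    have hmul : Real.exp (2 * t) * Real.exp (-t) ^ 2 = 1 := by
      rw [pow_two, ← Real.exp_add, ← Real.exp_add]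
      rw [show 2 * t + (-t + -t) = 0 by ring, Real.exp_zero]
    have : Real.exp (-2 * t) = Real.exp (-t) ^ 2 := by
      rw [pow_two, ← Real.exp_add]; ring_nf
    rw [← this] at hmul ⊢
    nlinarith
  have harg : ∀ x : ℝ, a * x / s = x / σ := by
    intro x
    rw [hsσ]
    field_simp
  -- main body
  have hfb : ∀ x, |f x| ≤ 1 := by
    intro x; rcases hf01 x with ⟨h0, h1⟩; rw [abs_of_nonneg h0]; exact h1
  have hfint : Integrable f P := integrable_of_bound P hf 1 hfb
  set δ := 2 * Real.sqrt (2 * π) / 5 * E with hδdef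
  have hsp := sqrt_two_pi_bounds.2
  have hδ0 : 0 ≤ δ := by
    rw [hδdef]; positivity
  set K := gaussConst * min (δ / σ) 1 with hKdef
  have hK0 : 0 ≤ K :=
    mul_nonneg gaussConst_pos.le (le_min (div_nonneg hδ0 hσ0.le) zero_le_one)
  set Aset := {u : Fin (n + 1) → ℝ | u 0 ≤ b - δ} with hAdef
  have hA : MeasurableSet Aset := measurableSet_le (measurable_pi_apply 0) measurable_const
  rw [duality b t ht f hf hf01]
  rw [show (fun u : Fin (n + 1) → ℝ =>
      f u * Phi (Real.exp (-t) * (u 0 - b) / Real.sqrt (1 - Real.exp (-2 * t))))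
      = fun u => f u * Phi ((u 0 - b) / σ) by
    funext u
    rw [← haa, ← hss, harg]]
  -- pointwise bound
  have hpoint : ∀ u, f u * Phi ((u 0 - b) / σ)
      ≤ (1/2) * f u - K * Aset.indicator f u := by
    intro u
    by_cases hub : b < u 0
    · have hfz : f u = 0 := hsupp u hub
      have hind : Aset.indicator f u = 0 := by
        by_cases h : u ∈ Aset
        · rw [Set.indicator_of_mem h, hfz]
        · rw [Set.indicator_of_notMem h]
      rw [hfz, hind]
      simp
    · push_neg at hub
      have hc : (u 0 - b) / σ ≤ 0 := div_nonpos_of_nonpos_of_nonneg (by linarith) hσ0.le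
      by_cases hmem : u ∈ Aset
      · rw [Set.indicator_of_mem hmem]
        have hub2 : u 0 ≤ b - δ := hmem
        have hneg : -((u 0 - b) / σ) = (b - u 0) / σ := by ring
        have h1 : Phi ((u 0 - b) / σ)
            ≤ 1/2 - gaussConst * min ((b - u 0) / σ) 1 := by
          have := Phi_le_of_nonpos hc
          rw [hneg] at this
          exact this
        have h2 : K ≤ gaussConst * min ((b - u 0) / σ) 1 := by
          refine mul_le_mul_of_nonneg_left ?_ gaussConst_pos.le
          exact min_le_min ((div_le_div_iff_of_pos_right hσ0).2 (by linarith)) le_rfl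
        have h3 : Phi ((u 0 - b) / σ) ≤ 1/2 - K := by linarith
        calc f u * Phi ((u 0 - b) / σ) ≤ f u * (1/2 - K) :=
              mul_le_mul_of_nonneg_left h3 (hf01 u).1
          _ = (1/2) * f u - K * f u := by ring
      · rw [Set.indicator_of_notMem hmem]
        have h3 : Phi ((u 0 - b) / σ) ≤ 1/2 := by
          have := Phi_mono hc
          rw [Phi_zero] at this
          linarith
        calc f u * Phi ((u 0 - b) / σ) ≤ f u * (1/2) :=
              mul_le_mul_of_nonneg_left h3 (hf01 u).1
          _ = (1/2) * f u - K * 0 := by ring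
          _ = _ := by rw [mul_zero]
  -- integrabilities
  have hgm : Measurable (fun u : Fin (n + 1) → ℝ => f u * Phi ((u 0 - b) / σ)) :=
    hf.mul (Phi_measurable.comp (by fun_prop))
  have hgint : Integrable (fun u : Fin (n + 1) → ℝ => f u * Phi ((u 0 - b) / σ)) P := by
    refine integrable_of_bound P hgm 1 ?_
    intro u
    rw [abs_mul, abs_of_nonneg (Phi_nonneg _)]
    calc |f u| * Phi ((u 0 - b) / σ) ≤ 1 * 1 :=
          mul_le_mul (hfb u) (Phi_le_one _) (Phi_nonneg _) zero_le_one
      _ = 1 := mul_one 1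
  have hhint : Integrable (fun u : Fin (n + 1) → ℝ =>
      (1/2) * f u - K * Aset.indicator f u) P :=
    (hfint.const_mul (1/2)).sub ((hfint.indicator hA).const_mul K)
  have hstep : ∫ u, f u * Phi ((u 0 - b) / σ) ∂P
      ≤ (1/2) * E - K * ∫ u in Aset, f u ∂P := by
    calc ∫ u, f u * Phi ((u 0 - b) / σ) ∂P
        ≤ ∫ u, ((1/2) * f u - K * Aset.indicator f u) ∂P :=
          integral_mono hgint hhint hpoint
      _ = (1/2) * E - K * ∫ u in Aset, f u ∂P := by
          rw [integral_sub (hfint.const_mul (1/2)) ((hfint.indicator hA).const_mul K),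
            integral_const_mul, integral_const_mul, integral_indicator hA, hE]
  -- lower bound on the integral over Aset
  set T := {u : Fin (n + 1) → ℝ | u 0 ∈ Ioc (b - δ) b} with hTdef
  have hT : MeasurableSet T := measurable_pi_apply 0 measurableSet_Ioc
  set W := T.indicator (1 : (Fin (n + 1) → ℝ) → ℝ) with hWdef
  have hWm : Measurable W := measurable_one.indicator hT
  have hWb : ∀ u, |W u| ≤ 1 := by
    intro u
    by_cases h : u ∈ T
    · rw [hWdef, Set.indicator_of_mem h]; norm_num
    · rw [hWdef, Set.indicator_of_notMem h]; norm_num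
  have hWint : Integrable W P := integrable_of_bound P hWm 1 hWb
  have hW0 : ∀ u, 0 ≤ W u := by
    intro u
    exact Set.indicator_nonneg (fun _ _ => zero_le_one) u
  have hcompl : ∫ u in Asetᶜ, f u ∂P ≤ (2/5) * E := by
    have h1 : ∫ u in Asetᶜ, f u ∂P ≤ ∫ u in Asetᶜ, W u ∂P := by
      refine setIntegral_mono_on hfint.integrableOn hWint.integrableOn hA.compl ?_
      intro u hu
      have hu' : b - δ < u 0 := not_le.1 hu
      by_cases hb : u 0 ≤ b
      · have : u ∈ T := ⟨hu', hb⟩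
        rw [hWdef, Set.indicator_of_mem this]
        exact (hf01 u).2
      · rw [hsupp u (not_le.1 hb)]
        exact hW0 u
    have h2 : ∫ u in Asetᶜ, W u ∂P ≤ ∫ u, W u ∂P :=
      setIntegral_le_integral hWint (ae_of_all _ hW0)
    have h3 : ∫ u, W u ∂P = ((γ) (Ioc (b - δ) b)).toReal := by
      rw [hWdef, integral_indicator_one hT, measureReal_def, hPdef, hTdef, stdGaussian_eval0 measurableSet_Ioc]
    have h4 : ((γ) (Ioc (b - δ) b)).toReal ≤ δ * (Real.sqrt (2 * π))⁻¹ := by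
      have := gauss_Ioc_le (u := b - δ) (v := b) (by linarith)
      calc ((γ) (Ioc (b - δ) b)).toReal ≤ (b - (b - δ)) * (Real.sqrt (2 * π))⁻¹ := this
        _ = δ * (Real.sqrt (2 * π))⁻¹ := by ring_nf
    have h5 : δ * (Real.sqrt (2 * π))⁻¹ = (2/5) * E := by
      rw [hδdef]
      field_simp
    linarith
  have hAbound : (3/5) * E ≤ ∫ u in Aset, f u ∂P := by
    have hsplitE : (∫ u in Aset, f u ∂P) + ∫ u in Asetᶜ, f u ∂P = E :=
      integral_add_compl hA hfint
    linarith
  have hmain : ∫ u, f u * Phi ((u 0 - b) / σ) ∂P ≤ (1/2) * E - K * ((3/5) * E) := by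
    have := mul_le_mul_of_nonneg_left hAbound hK0
    linarith
  -- case split
  clear_value K δ E σ
  rcases le_or_gt δ σ with hδσ | hσδ
  · have hmin : min (δ / σ) 1 = δ / σ := min_eq_left ((div_le_one hσ0).2 hδσ)
    refine le_trans ?_ (le_max_left _ _)
    have hexp := exp_half_bounds.1
    have hsptop := sqrt_two_pi_bounds.1
    have key : (1/10) * E ^ 2 ≤ gaussConst * δ * ((3/5) * E) := by
      rw [hδdef, gaussConst]
      have h : Real.exp (-(1/2:ℝ)) / Real.sqrt (2*π) * (2 * Real.sqrt (2*π) / 5 * E)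
          * ((3/5) * E) = Real.exp (-(1/2:ℝ)) * ((6/25) * E^2) := by
        field_simp
        ring
      rw [h]
      nlinarith [exp_half_bounds.1, sq_nonneg E]
    have key2 : (1/10) * E ^ 2 / σ ≤ gaussConst * δ * ((3/5) * E) / σ :=
      (div_le_div_iff_of_pos_right hσ0).2 key
    have key3 : gaussConst * δ * ((3/5) * E) / σ = K * ((3/5) * E) := by
      rw [hKdef, hmin]
      ring
    have : (1/10) * E ^ 2 / σ ≤ K * ((3/5) * E) := by rw [← key3]; exact key2
    calc ∫ u, f u * Phi ((u 0 - b) / σ) ∂P ≤ (1/2) * E - K * ((3/5) * E) := hmain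
      _ ≤ (1/2) * E - (1/10) * E ^ 2 / σ := by linarith
      _ = 1 / 2 * E - 1 / 10 * E ^ 2 / σ := by norm_num
  · have hmin : min (δ / σ) 1 = 1 := min_eq_right ((one_le_div hσ0).2 hσδ.le)
    refine le_trans ?_ (le_max_right _ _)
    have hgc := gaussConst_ge
    have hKval : K = gaussConst := by rw [hKdef, hmin, mul_one]
    calc ∫ u, f u * Phi ((u 0 - b) / σ) ∂P ≤ (1/2) * E - K * ((3/5) * E) := hmain
      _ ≤ (3/8) * E := by
          rw [hKval]
          have hprod : (5/24 : ℝ) * ((3/5) * E) ≤ gaussConst * ((3/5) * E) :=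
            mul_le_mul_of_nonneg_right hgc (by linarith)
          linarith
      _ = 3 / 8 * E := by norm_num
end
end

section
/- Let B = {x ∈ ℝⁿ : x₁ ≤ a}, B' = {x ∈ ℝⁿ : x₁ ≤ b}, and define F(t) = E[1_B(X)·(Pₜ1_{B'})(X)] for X ~ γₙ. Then F'(t) = -(kₜ/(2π))·exp(-(a² + b² - 2e^{-t}ab)/(2(1-e^{-2t}))), where kₜ = (e^{2t}-1)^{-1/2}. In particular F is strictly decreasing in t. -/
open MeasureTheory Real ProbabilityTheory

noncomputable section

/-- F(t) = E[1_{x₁ ≤ a}·Pₜ1_{x₁ ≤ b}] under γₙ. -/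
def Fab (n : ℕ) (a b : ℝ) (t : ℝ) : ℝ :=
  ∫ x in {x : Fin (n + 1) → ℝ | x 0 ≤ a},
    OU (n + 1) t (Set.indicator {x : Fin (n + 1) → ℝ | x 0 ≤ b} 1) x
    ∂(stdGaussian (n + 1))

open Set Filter
open scoped NNReal ENNReal Topology

namespace HalfAux

def phi (x : ℝ) : ℝ := gaussianPDFReal 0 1 x
lemma phi_nonneg (x : ℝ) : 0 ≤ phi x := gaussianPDFReal_nonneg 0 1 x
lemma phi_integrable : Integrable phi := integrable_gaussianPDFReal 0 1
def cdf (c : ℝ) : ℝ := ∫ v in Iic c, phi v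
lemma cdf_mono : Monotone cdf := fun _ _ hxy =>
  setIntegral_mono_set phi_integrable.integrableOn
    (ae_of_all _ fun u => phi_nonneg u) (HasSubset.Subset.eventuallyLE (Iic_subset_Iic.2 hxy))
lemma cdf_measurable : Measurable cdf := cdf_mono.measurable
lemma cdf_eq_toReal (c : ℝ) : cdf c = ((gaussianReal 0 1) (Iic c)).toReal := by
  rw [gaussianReal_apply_eq_integral 0 one_ne_zero,
    ENNReal.toReal_ofReal (setIntegral_nonneg measurableSet_Iic fun x _ =>
      gaussianPDFReal_nonneg 0 1 x)]
  rfl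
lemma stdGaussian_map_eval (n : ℕ) :
    (stdGaussian (n + 1)).map (fun y => y 0) = gaussianReal 0 1 := by
  have h := measurePreserving_piFinSuccAbove (fun _ : Fin (n + 1) => gaussianReal 0 1) 0
  have he : (fun y : Fin (n + 1) → ℝ => y 0)
      = Prod.fst ∘ (MeasurableEquiv.piFinSuccAbove (fun _ => ℝ) 0) := rfl
  rw [_root_.stdGaussian, he, ← Measure.map_map measurable_fst (MeasurableEquiv.measurable _),
    h.map_eq, Measure.map_fst_prod]
  simp
lemma integral_eval (n : ℕ) (g : ℝ → ℝ) (hg : AEStronglyMeasurable g (gaussianReal 0 1)) :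
    ∫ y, g (y 0) ∂(stdGaussian (n + 1)) = ∫ u, g u ∂(gaussianReal 0 1) := by
  rw [← stdGaussian_map_eval n,
    integral_map (measurable_pi_apply 0).aemeasurable (by rwa [stdGaussian_map_eval])]
lemma integral_gaussian_restrict (s : Set ℝ) (hs : MeasurableSet s) (g : ℝ → ℝ) :
    ∫ u in s, g u ∂(gaussianReal 0 1) = ∫ u in s, phi u * g u := by
  rw [gaussianReal_of_var_ne_zero 0 one_ne_zero, restrict_withDensity hs,
    show gaussianPDF 0 1 = fun u => ((Real.toNNReal (phi u) : ℝ≥0) : ℝ≥0∞) from rfl,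
    integral_withDensity_eq_integral_smul
      (by exact (measurable_gaussianPDFReal 0 1).real_toNNReal) g]
  refine setIntegral_congr_fun hs fun u _ => ?_
  simp [NNReal.smul_def, Real.coe_toNNReal _ (phi_nonneg u)]


lemma phi_def (x : ℝ) : phi x = (Real.sqrt (2 * π))⁻¹ * Real.exp (-x ^ 2 / 2) := by
  simp [phi, gaussianPDFReal]

lemma phi_continuous : Continuous phi := by
  rw [show phi = fun x => (Real.sqrt (2 * π))⁻¹ * Real.exp (-x ^ 2 / 2) from funext phi_def]
  continuity

lemma phi_measurable : Measurable phi := measurable_gaussianPDFReal 0 1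

lemma phi_le_one (x : ℝ) : phi x ≤ 1 := by
  rw [phi_def]
  have h1 : Real.exp (-x ^ 2 / 2) ≤ 1 := by
    rw [Real.exp_le_one_iff]; nlinarith [sq_nonneg x]
  have h3 : (1:ℝ) ≤ Real.sqrt (2 * π) := by
    rw [show (1:ℝ) = Real.sqrt 1 by simp]
    exact Real.sqrt_le_sqrt (by nlinarith [Real.pi_gt_three])
  have h2 : (Real.sqrt (2 * π))⁻¹ ≤ 1 := by
    rw [inv_le_one_iff₀]; right; exact h3
  have h4 : (0:ℝ) ≤ (Real.sqrt (2 * π))⁻¹ := by positivity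
  nlinarith

lemma cdf_nonneg (c : ℝ) : 0 ≤ cdf c :=
  setIntegral_nonneg measurableSet_Iic fun x _ => phi_nonneg x

lemma cdf_le_one (c : ℝ) : cdf c ≤ 1 := by
  have h := integral_gaussianPDFReal_eq_one 0 (one_ne_zero)
  calc cdf c ≤ ∫ v, phi v := by
        refine setIntegral_le_integral phi_integrable (ae_of_all _ fun x => phi_nonneg x)
    _ = 1 := h

lemma hasDerivAt_cdf (c : ℝ) : HasDerivAt cdf (phi c) c := by
  have heq : cdf = fun c => (∫ v in Iic 0, phi v) + ∫ v in (0:ℝ)..c, phi v := by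
    funext x
    rw [← intervalIntegral.integral_Iic_sub_Iic phi_integrable.integrableOn
      phi_integrable.integrableOn]
    simp [cdf]
  rw [heq]
  exact (intervalIntegral.integral_hasDerivAt_right phi_integrable.intervalIntegrable
    (phi_continuous.stronglyMeasurable.stronglyMeasurableAtFilter)
    phi_continuous.continuousAt).const_add _

/-- σ(t) -/
def sig (t : ℝ) : ℝ := Real.sqrt (1 - Real.exp (-2 * t))

lemma sig_pos {t : ℝ} (ht : 0 < t) : 0 < sig t := by
  apply Real.sqrt_pos.2
  have : Real.exp (-2 * t) < 1 := by
    rw [Real.exp_lt_one_iff]; nlinarith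
  linarith

lemma sig_sq {t : ℝ} (ht : 0 < t) : sig t ^ 2 = 1 - Real.exp (-2 * t) := by
  rw [sig, sq_sqrt]
  have : Real.exp (-2 * t) < 1 := by rw [Real.exp_lt_one_iff]; nlinarith
  linarith

/-- argument of the cdf -/
def carg (b t u : ℝ) : ℝ := (b - Real.exp (-t) * u) / sig t

lemma OU_indicator (n : ℕ) {t : ℝ} (ht : 0 < t) (b : ℝ) (x : Fin (n + 1) → ℝ) :
    OU (n + 1) t (Set.indicator {x : Fin (n + 1) → ℝ | x 0 ≤ b} 1) x
      = cdf (carg b t (x 0)) := by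
  have hs := sig_pos ht
  have hpt : ∀ y : Fin (n + 1) → ℝ,
      Set.indicator {x : Fin (n + 1) → ℝ | x 0 ≤ b} (1 : (Fin (n + 1) → ℝ) → ℝ)
        (fun i => Real.exp (-t) * x i + Real.sqrt (1 - Real.exp (-2 * t)) * y i)
      = Set.indicator (Iic (carg b t (x 0))) (1 : ℝ → ℝ) (y 0) := by
    intro y
    have hiff : (fun i => Real.exp (-t) * x i + Real.sqrt (1 - Real.exp (-2 * t)) * y i) ∈
        {x : Fin (n + 1) → ℝ | x 0 ≤ b} ↔ y 0 ∈ Iic (carg b t (x 0)) := by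
      simp only [Set.mem_setOf_eq, Set.mem_Iic, carg]
      rw [le_div_iff₀ hs]
      unfold sig
      constructor <;> intro h <;> nlinarith [h]
    simp only [Set.indicator_apply, hiff, Pi.one_apply]
  rw [OU]
  simp_rw [hpt]
  rw [integral_eval n _ ((measurable_one.indicator measurableSet_Iic).aestronglyMeasurable)]
  rw [integral_indicator_one measurableSet_Iic, cdf_eq_toReal, measureReal_def]

lemma Fab_eq (n : ℕ) (a b : ℝ) {t : ℝ} (ht : 0 < t) :
    Fab n a b t = ∫ u in Iic a, phi u * cdf (carg b t u) := by
  rw [Fab]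
  have hset : {x : Fin (n + 1) → ℝ | x 0 ≤ a} = (fun x : Fin (n+1) → ℝ => x 0) ⁻¹' (Iic a) := rfl
  have hmeas : MeasurableSet {x : Fin (n + 1) → ℝ | x 0 ≤ a} := by
    rw [hset]; exact measurableSet_Iic.preimage (measurable_pi_apply 0)
  rw [← integral_indicator hmeas]
  have : ∀ x : Fin (n+1) → ℝ,
      Set.indicator {x : Fin (n + 1) → ℝ | x 0 ≤ a}
        (fun x => OU (n + 1) t (Set.indicator {x : Fin (n + 1) → ℝ | x 0 ≤ b} 1) x) x
      = Set.indicator (Iic a) (fun u => cdf (carg b t u)) (x 0) := by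
    intro x
    rw [Set.indicator_apply, Set.indicator_apply]
    simp only [Set.mem_setOf_eq, Set.mem_Iic]
    split <;> [exact OU_indicator n ht b x; rfl]
  simp_rw [this]
  rw [integral_eval n ((Iic a).indicator (fun u => cdf (carg b t u)))
      (((cdf_measurable.comp (by unfold carg; exact (measurable_const.sub (measurable_id'.const_mul _)).div_const _)).indicator
      measurableSet_Iic).aestronglyMeasurable),
    integral_indicator measurableSet_Iic,
    integral_gaussian_restrict _ measurableSet_Iic]




lemma sig_mono {t1 t2 : ℝ} (h : t1 ≤ t2) : sig t1 ≤ sig t2 := by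
  apply Real.sqrt_le_sqrt
  have := Real.exp_le_exp.2 (by linarith : -2 * t2 ≤ -2 * t1)
  linarith

lemma hasDerivAt_sig {t : ℝ} (ht : 0 < t) :
    HasDerivAt sig (Real.exp (-2 * t) / sig t) t := by
  have hinner : HasDerivAt (fun τ => 1 - Real.exp (-2 * τ)) (2 * Real.exp (-2 * t)) t := by
    have h1 : HasDerivAt (fun τ : ℝ => -2 * τ) (-2) t := by simpa using (hasDerivAt_id t).const_mul (-2)
    have h2 := (Real.hasDerivAt_exp (-2 * t)).comp t h1
    have h3 := h2.const_sub 1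
    refine h3.congr_deriv (Eq.symm ?_)
    ring
  have hne : 1 - Real.exp (-2 * t) ≠ 0 := by
    have := sig_pos ht
    rw [sig, Real.sqrt_pos] at this
    linarith
  have := (Real.hasDerivAt_sqrt hne).comp t hinner
  refine this.congr_deriv (Eq.symm ?_)
  rw [sig]
  field_simp

lemma hasDerivAt_carg (b u : ℝ) {t : ℝ} (ht : 0 < t) :
    HasDerivAt (fun τ => carg b τ u)
      (Real.exp (-t) * (u - Real.exp (-t) * b) / sig t ^ 3) t := by
  have hs := sig_pos ht
  have hN : HasDerivAt (fun τ => b - Real.exp (-τ) * u) (Real.exp (-t) * u) t := by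
    have h1 : HasDerivAt (fun τ : ℝ => -τ) (-1) t := hasDerivAt_neg' t
    have h2 := (Real.hasDerivAt_exp (-t)).comp t h1
    have h3 := (h2.mul_const u).const_sub b
    refine h3.congr_deriv (Eq.symm ?_)
    ring
  have hD := hasDerivAt_sig ht
  have h := hN.div hD hs.ne'
  refine h.congr_deriv (Eq.symm ?_)
  have hsq : sig t ^ 2 = 1 - Real.exp (-2 * t) := sig_sq ht
  have hexp2 : Real.exp (-2 * t) = Real.exp (-t) * Real.exp (-t) := by
    rw [← Real.exp_add]; ring_nf
  field_simp
  have hE : Real.exp (-(t * 2)) = Real.exp (-2 * t) := by ring_nf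
  simp only [hE]
  linear_combination (-(Real.exp (-t) * u)) * hsq +
    b * hexp2

/-- the t-derivative of the integrand -/
def Fd (b : ℝ) (t u : ℝ) : ℝ :=
  phi u * (phi (carg b t u) * (Real.exp (-t) * (u - Real.exp (-t) * b) / sig t ^ 3))

lemma hasDerivAt_integrand (b u : ℝ) {t : ℝ} (ht : 0 < t) :
    HasDerivAt (fun τ => phi u * cdf (carg b τ u)) (Fd b t u) t := by
  have h := ((hasDerivAt_cdf (carg b t u)).comp t (hasDerivAt_carg b u ht)).const_mul (phi u)
  exact h

lemma integrable_phi_mul_abs : Integrable (fun u => phi u * |u|) := by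
  have h1 : Integrable (fun u : ℝ => |u * Real.exp (-(1/2 : ℝ) * u ^ 2)|) :=
    (integrable_mul_exp_neg_mul_sq (by norm_num : (0:ℝ) < 1/2)).abs
  have h2 := h1.const_mul (Real.sqrt (2 * π))⁻¹
  refine h2.congr (ae_of_all _ fun u => ?_)
  have he : Real.exp (-(1/2:ℝ) * u ^ 2) = Real.exp (-u ^ 2 / 2) := by ring_nf
  show (Real.sqrt (2 * π))⁻¹ * |u * Real.exp (-(1/2:ℝ) * u ^ 2)| = phi u * |u|
  rw [abs_mul, Real.abs_exp, he, phi_def]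
  ring

lemma mcarg (b τ : ℝ) : Measurable (carg b τ) :=
  (measurable_const.sub (measurable_id'.const_mul _)).div_const _

lemma measurable_Fd (b τ : ℝ) : Measurable (Fd b τ) :=
  phi_measurable.mul ((phi_measurable.comp (mcarg b τ)).mul
    (((measurable_id'.sub measurable_const).const_mul _).div_const _))

lemma hasDerivAt_G (a b : ℝ) {t : ℝ} (ht : 0 < t) :
    Integrable (Fd b t) (volume.restrict (Iic a)) ∧
    HasDerivAt (fun τ => ∫ u in Iic a, phi u * cdf (carg b τ u))
      (∫ u in Iic a, Fd b t u) t := by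
  have ht2 : 0 < t / 2 := by linarith
  set K := (sig (t / 2) ^ 3)⁻¹ with hK
  have hs0 : 0 < sig (t / 2) := sig_pos ht2
  have hKpos : 0 < K := by positivity
  refine hasDerivAt_integral_of_dominated_loc_of_deriv_le (F := fun τ u => phi u * cdf (carg b τ u))
    (F' := Fd b) (bound := fun u => K * (phi u * |u|) + K * |b| * phi u) (Metric.ball_mem_nhds t ht2)
    (Eventually.of_forall fun τ => ?_) ?_ ?_ ?_ ?_ ?_
  · exact (phi_measurable.mul (cdf_measurable.comp (mcarg b τ))).aestronglyMeasurable
  · refine (phi_integrable.restrict (s := Iic a)).mono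
      ((phi_measurable.mul (cdf_measurable.comp (mcarg b t))).aestronglyMeasurable)
      (ae_of_all _ fun u => ?_)
    rw [Real.norm_eq_abs, Real.norm_eq_abs, abs_mul, abs_of_nonneg (phi_nonneg u),
      abs_of_nonneg (cdf_nonneg _)]
    nlinarith [cdf_le_one (carg b t u), cdf_nonneg (carg b t u), phi_nonneg u]
  · exact (measurable_Fd b t).aestronglyMeasurable
  · refine ae_of_all _ fun u τ hτ => ?_
    rw [Metric.mem_ball, Real.dist_eq, abs_sub_lt_iff] at hτ
    have hτpos : 0 < τ := by linarith
    set e := Real.exp (-τ) with hedef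
    have he0 : 0 < e := Real.exp_pos _
    have he1 : e ≤ 1 := Real.exp_le_one_iff.2 (by linarith)
    have hss : sig (t / 2) ≤ sig τ := sig_mono (by linarith)
    have hs3 : sig (t / 2) ^ 3 ≤ sig τ ^ 3 := by gcongr
    have hsτ : 0 < sig τ := sig_pos hτpos
    have habs : |u - e * b| ≤ |u| + |b| := by
      calc |u - e * b| = |u + -(e * b)| := by rw [sub_eq_add_neg]
        _ ≤ |u| + |-(e * b)| := abs_add_le _ _
        _ = |u| + e * |b| := by rw [abs_neg, abs_mul, abs_of_pos he0]
        _ ≤ |u| + |b| := by nlinarith [abs_nonneg b]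
    have h1 : e * |u - e * b| ≤ |u| + |b| := by nlinarith [abs_nonneg (u - e * b)]
    have h2 : e * |u - e * b| / sig τ ^ 3 ≤ (|u| + |b|) / sig (t / 2) ^ 3 := by
      apply div_le_div₀ (by positivity) h1 (by positivity) hs3
    have hX0 : 0 ≤ e * |u - e * b| / sig τ ^ 3 := by positivity
    have h3 : phi (carg b τ u) * (e * |u - e * b| / sig τ ^ 3)
        ≤ (|u| + |b|) / sig (t / 2) ^ 3 :=
      calc phi (carg b τ u) * (e * |u - e * b| / sig τ ^ 3)
          ≤ 1 * (e * |u - e * b| / sig τ ^ 3) :=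
            mul_le_mul_of_nonneg_right (phi_le_one _) hX0
        _ = e * |u - e * b| / sig τ ^ 3 := one_mul _
        _ ≤ (|u| + |b|) / sig (t / 2) ^ 3 := h2
    have hnorm : ‖Fd b τ u‖ = phi u * (phi (carg b τ u) * (e * |u - e * b| / sig τ ^ 3)) := by
      rw [Fd, Real.norm_eq_abs, abs_mul, abs_of_nonneg (phi_nonneg u), abs_mul,
        abs_of_nonneg (phi_nonneg _), abs_div, abs_of_pos (by positivity : (0:ℝ) < sig τ ^ 3),
        abs_mul, abs_of_pos he0]
    rw [hnorm]
    calc phi u * (phi (carg b τ u) * (e * |u - e * b| / sig τ ^ 3))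
        ≤ phi u * ((|u| + |b|) / sig (t / 2) ^ 3) :=
          mul_le_mul_of_nonneg_left h3 (phi_nonneg u)
      _ = K * (phi u * |u|) + K * |b| * phi u := by rw [div_eq_mul_inv, ← hK]; ring
  · exact ((integrable_phi_mul_abs.const_mul K).add
      ((phi_integrable.const_mul (K * |b|)))).restrict
  · refine ae_of_all _ fun u τ hτ => ?_
    rw [Metric.mem_ball, Real.dist_eq, abs_sub_lt_iff] at hτ
    exact hasDerivAt_integrand b u (by linarith)

lemma sqrt_exp_sub_one {t : ℝ} (ht : 0 < t) :
    Real.sqrt (Real.exp (2 * t) - 1) = Real.exp t * sig t := by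
  have h1 : Real.exp t ^ 2 = Real.exp (2 * t) := by
    rw [sq, ← Real.exp_add]; ring_nf
  have h2 : Real.exp (2 * t) * Real.exp (-2 * t) = 1 := by
    rw [← Real.exp_add]; norm_num
  have h3 : Real.exp (2 * t) - 1 = Real.exp t ^ 2 * (1 - Real.exp (-2 * t)) := by
    rw [h1]; nlinarith
  rw [h3, sig, Real.sqrt_mul (sq_nonneg _), Real.sqrt_sq (Real.exp_pos t).le]

lemma integral_Fd (a b : ℝ) {t : ℝ} (ht : 0 < t)
    (hint : Integrable (Fd b t) (volume.restrict (Iic a))) :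
    ∫ u in Iic a, Fd b t u =
      -((Real.sqrt (Real.exp (2 * t) - 1))⁻¹ / (2 * π)) *
        Real.exp (-(a ^ 2 + b ^ 2 - 2 * Real.exp (-t) * a * b)
          / (2 * (1 - Real.exp (-2 * t)))) := by
  have hs : 0 < sig t := sig_pos ht
  set e := Real.exp (-t) with hedef
  have he0 : 0 < e := Real.exp_pos _
  have hexp2 : Real.exp (-2 * t) = e * e := by rw [hedef, ← Real.exp_add]; ring_nf
  have hsq2 : sig t ^ 2 = 1 - e ^ 2 := by rw [sig_sq ht, hexp2]; ring
  set w : ℝ → ℝ := fun x => -(x - e * b) ^ 2 / (2 * sig t ^ 2) + -(b ^ 2) / 2 with hw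
  set C : ℝ := -((2 * π)⁻¹ * (e / sig t)) with hC
  set H : ℝ → ℝ := fun x => C * Real.exp (w x) with hH
  have h2pi : (Real.sqrt (2 * π))⁻¹ * (Real.sqrt (2 * π))⁻¹ = (2 * π)⁻¹ := by
    rw [← mul_inv, Real.mul_self_sqrt (by positivity)]
  have hderiv : ∀ x : ℝ, HasDerivAt H (Fd b t x) x := by
    intro x
    have h1 : HasDerivAt (fun x : ℝ => x - e * b) 1 x := (hasDerivAt_id x).sub_const _
    have h2 := h1.pow 2
    have h3 := (((h2.div_const (2 * sig t ^ 2)).neg).add_const (-(b ^ 2) / 2))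
    have hwderiv : HasDerivAt w (-(x - e * b) / sig t ^ 2) x := by
      rw [hw]
      simp only [neg_div]
      refine (h3.congr_deriv (Eq.symm ?_)).congr_of_eventuallyEq
        (Filter.Eventually.of_forall fun y => by simp only [Pi.neg_apply, Pi.pow_apply]; ring)
      field_simp
      ring
    have h4 := ((Real.hasDerivAt_exp (w x)).comp x hwderiv).const_mul C
    refine h4.congr_deriv (Eq.symm ?_)
    have hexps : Real.exp (-x ^ 2 / 2) * Real.exp (-((b - e * x) / sig t) ^ 2 / 2)
        = Real.exp (w x) := by
      rw [← Real.exp_add, hw]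
      congr 1
      rw [div_pow]
      field_simp
      linear_combination (b ^ 2 - x ^ 2) * hsq2
    have key : phi x * phi ((b - e * x) / sig t) = (2 * π)⁻¹ * Real.exp (w x) :=
      calc phi x * phi ((b - e * x) / sig t)
          = (Real.sqrt (2 * π))⁻¹ * (Real.sqrt (2 * π))⁻¹ *
            (Real.exp (-x ^ 2 / 2) * Real.exp (-((b - e * x) / sig t) ^ 2 / 2)) := by
            rw [phi_def, phi_def]; ring
        _ = (2 * π)⁻¹ * Real.exp (w x) := by rw [h2pi, hexps]
    have hFd : Fd b t x = phi x * phi (carg b t x) * (e * (x - e * b) / sig t ^ 3) := by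
      rw [Fd]; ring
    rw [hFd, carg, key, hC]
    field_simp
  have htend : Tendsto H atBot (𝓝 0) := by
    have h1 : Tendsto (fun x : ℝ => x - e * b) atBot atBot :=
      tendsto_atBot_add_const_right _ _ tendsto_id
    have h2 : Tendsto (fun x : ℝ => (x - e * b) ^ 2) atBot atTop := by
      have habs : Tendsto (fun x : ℝ => |x - e * b|) atBot atTop :=
        tendsto_abs_atBot_atTop.comp h1
      have hp : Tendsto (fun y : ℝ => y ^ 2) atTop atTop := tendsto_pow_atTop two_ne_zero
      refine (hp.comp habs).congr fun x => ?_
      simp [sq_abs]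
    have h3 : Tendsto (fun x : ℝ => -(x - e * b) ^ 2 / (2 * sig t ^ 2) + -(b ^ 2) / 2)
        atBot atBot := by
      apply tendsto_atBot_add_const_right
      apply Tendsto.atBot_div_const (by positivity)
      exact tendsto_neg_atTop_atBot.comp h2
    have h4 : Tendsto (fun x => Real.exp (w x)) atBot (𝓝 0) :=
      Real.tendsto_exp_atBot.comp h3
    have := h4.const_mul C
    simpa using this
  have hFTC := integral_Iic_of_hasDerivAt_of_tendsto' (a := a)
    (fun x _ => hderiv x) hint htend
  rw [hFTC, sub_zero]
  show C * Real.exp (w a) = _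
  have hsig2 : 1 - Real.exp (-2 * t) = sig t ^ 2 := (sig_sq ht).symm
  have hwa : w a = -(a ^ 2 + b ^ 2 - 2 * e * a * b) / (2 * (1 - Real.exp (-2 * t))) := by
    show -(a - e * b) ^ 2 / (2 * sig t ^ 2) + -(b ^ 2) / 2 = _
    rw [hsig2]
    field_simp
    linear_combination (-b ^ 2) * hsq2
  have hinv : (Real.exp t * sig t)⁻¹ = e / sig t := by
    rw [mul_inv, ← Real.exp_neg, hedef]
    ring
  rw [hwa, hC, sqrt_exp_sub_one ht, hinv]
  ring

end HalfAux

open HalfAux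

/-- with B = {x₁ ≤ a}, B' = {x₁ ≤ b} and F(t) = E[1_B·Pₜ1_{B'}],
F'(t) = -(kₜ/(2π))·exp(-(a² + b² - 2e^{-t}ab)/(2(1-e^{-2t}))) for t > 0; in particular
F is strictly decreasing on (0,∞). -/
theorem deriv_halfspace_correlation (n : ℕ) (a b : ℝ) :
    (∀ t : ℝ, 0 < t →
        HasDerivAt (Fab n a b)
          (-((Real.sqrt (Real.exp (2 * t) - 1))⁻¹ / (2 * Real.pi)) *
            Real.exp (-(a ^ 2 + b ^ 2 - 2 * Real.exp (-t) * a * b)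
              / (2 * (1 - Real.exp (-2 * t))))) t)
      ∧ StrictAntiOn (Fab n a b) (Set.Ioi 0) := by
  have hderiv : ∀ t : ℝ, 0 < t →
      HasDerivAt (Fab n a b)
        (-((Real.sqrt (Real.exp (2 * t) - 1))⁻¹ / (2 * Real.pi)) *
          Real.exp (-(a ^ 2 + b ^ 2 - 2 * Real.exp (-t) * a * b)
            / (2 * (1 - Real.exp (-2 * t))))) t := by
    intro t ht
    have hG := hasDerivAt_G a b ht
    have hEq : Fab n a b =ᶠ[nhds t] (fun τ => ∫ u in Set.Iic a, phi u * cdf (carg b τ u)) := by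
      filter_upwards [Ioi_mem_nhds ht] with τ hτ
      exact Fab_eq n a b hτ
    have h2 := hG.2.congr_of_eventuallyEq hEq
    rwa [integral_Fd a b ht hG.1] at h2
  refine ⟨hderiv, ?_⟩
  refine strictAntiOn_of_deriv_neg (convex_Ioi 0) ?_ ?_
  · intro x hx
    exact (hderiv x hx).continuousAt.continuousWithinAt
  · intro x hx
    rw [interior_Ioi] at hx
    rw [(hderiv x (Set.mem_Ioi.1 hx)).deriv]
    have h0 : (1:ℝ) < Real.exp (2 * x) := by
      rw [← Real.exp_zero]
      exact Real.exp_lt_exp.2 (by simpa using (Set.mem_Ioi.1 hx))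
    have h1 : 0 < Real.exp (2 * x) - 1 := by linarith
    have h2 : 0 < (Real.sqrt (Real.exp (2 * x) - 1))⁻¹ :=
      inv_pos.2 (Real.sqrt_pos.2 h1)
    have h3 : 0 < ((Real.sqrt (Real.exp (2 * x) - 1))⁻¹ / (2 * Real.pi)) *
        Real.exp (-(a ^ 2 + b ^ 2 - 2 * Real.exp (-x) * a * b)
          / (2 * (1 - Real.exp (-2 * x)))) :=
      mul_pos (div_pos h2 (by positivity)) (Real.exp_pos _)
    linarith
end
end

section
/- Let A ⊂ ℝⁿ be measurable with γₙ(A) = 1/2, let 0 < ρ < 1, and let k ∈ ℕ with k ≥ 1. Set θ = cos(k·arccos ρ) and suppose θ > -1. Then P_θ(X ∈ A, Y ∉ A) ≤ k·P_ρ(X ∈ A, Y ∉ A), where P_r denotes the joint law of r-correlated standard Gaussian vectors (X,Y) on ℝⁿ. -/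
open MeasureTheory Real ProbabilityTheory
open scoped ENNReal NNReal

noncomputable section

/-- The joint law of a pair of r-correlated standard Gaussian vectors on ℝⁿ. -/
def jointGaussian (n : ℕ) (r : ℝ) : Measure ((Fin n → ℝ) × (Fin n → ℝ)) :=
  Measure.map (fun p => (p.1, fun i => r * p.1 i + Real.sqrt (1 - r ^ 2) * p.2 i))
    ((stdGaussian n).prod (stdGaussian n))

namespace SubaddAux
/-- rotation of the plane as a linear equiv -/
def rotL (a b : ℝ) (h : a ^ 2 + b ^ 2 = 1) : (ℝ × ℝ) ≃ₗ[ℝ] ℝ × ℝ where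
  toFun p := (a * p.1 + b * p.2, -b * p.1 + a * p.2)
  invFun p := (a * p.1 - b * p.2, b * p.1 + a * p.2)
  map_add' p q := by ext <;> (simp; ring)
  map_smul' c p := by ext <;> (simp; ring)
  left_inv p := Prod.ext (by simp; linear_combination p.1 * h)
    (by simp; linear_combination p.2 * h)
  right_inv p := Prod.ext (by simp; linear_combination p.1 * h)
    (by simp; linear_combination p.2 * h)

@[simp] lemma rotL_apply (a b : ℝ) (h : a ^ 2 + b ^ 2 = 1) (p : ℝ × ℝ) :
    rotL a b h p = (a * p.1 + b * p.2, -b * p.1 + a * p.2) := by rfl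

lemma rotL_det (a b : ℝ) (h : a ^ 2 + b ^ 2 = 1) :
    LinearMap.det ((rotL a b h : (ℝ × ℝ) ≃ₗ[ℝ] ℝ × ℝ) : (ℝ × ℝ) →ₗ[ℝ] ℝ × ℝ) = 1 := by
  rw [← LinearMap.det_toMatrix (Module.Basis.finTwoProd ℝ)]
  have : LinearMap.toMatrix (Module.Basis.finTwoProd ℝ) (Module.Basis.finTwoProd ℝ)
      ((rotL a b h : (ℝ × ℝ) ≃ₗ[ℝ] ℝ × ℝ) : (ℝ × ℝ) →ₗ[ℝ] ℝ × ℝ) = !![a, b; -b, a] := by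
    ext i j
    fin_cases i <;> fin_cases j <;>
      simp [LinearMap.toMatrix_apply, Module.Basis.finTwoProd_zero, Module.Basis.finTwoProd_one,
        Module.Basis.coe_finTwoProd_repr]
  rw [this, Matrix.det_fin_two_of]
  linarith

lemma rotL_measurable (a b : ℝ) (h : a ^ 2 + b ^ 2 = 1) : Measurable (rotL a b h) := by
  have : Measurable fun p : ℝ × ℝ => ((a * p.1 + b * p.2, -b * p.1 + a * p.2) : ℝ × ℝ) := by
    fun_prop
  exact this

lemma rotL_volume (a b : ℝ) (h : a ^ 2 + b ^ 2 = 1) :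
    MeasurePreserving (rotL a b h) (volume : Measure (ℝ × ℝ)) volume := by
  haveI : Measure.IsAddHaarMeasure (volume : Measure (ℝ × ℝ)) :=
    inferInstanceAs (Measure.IsAddHaarMeasure ((volume : Measure ℝ).prod volume))
  refine ⟨rotL_measurable a b h, ?_⟩
  have hd : LinearMap.det ((rotL a b h : (ℝ × ℝ) ≃ₗ[ℝ] ℝ × ℝ) : (ℝ × ℝ) →ₗ[ℝ] ℝ × ℝ) ≠ 0 := by
    rw [rotL_det]; norm_num
  have := Measure.map_linearMap_addHaar_eq_smul_addHaar (volume : Measure (ℝ × ℝ)) hd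
  rw [rotL_det] at this
  simpa using this

lemma gauss_prod_eq :
    ((gaussianReal 0 1).prod (gaussianReal 0 1)) =
      (volume : Measure (ℝ × ℝ)).withDensity
        (fun p => gaussianPDF 0 1 p.1 * gaussianPDF 0 1 p.2) := by
  have h1 : (1 : ℝ≥0) ≠ 0 := one_ne_zero
  refine Measure.prod_eq fun s t hs ht => ?_
  rw [withDensity_apply _ (hs.prod ht), Measure.volume_eq_prod, ← Measure.prod_restrict,
    lintegral_prod_mul (measurable_gaussianPDF 0 1).aemeasurable
      (measurable_gaussianPDF 0 1).aemeasurable,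
    gaussianReal_apply 0 h1 s, gaussianReal_apply 0 h1 t]

lemma gaussianPDF_rot (a b x y : ℝ) (h : a ^ 2 + b ^ 2 = 1) :
    gaussianPDF 0 1 (a * x + b * y) * gaussianPDF 0 1 (-b * x + a * y)
      = gaussianPDF 0 1 x * gaussianPDF 0 1 y := by
  simp only [gaussianPDF]
  rw [← ENNReal.ofReal_mul (gaussianPDFReal_nonneg _ _ _),
    ← ENNReal.ofReal_mul (gaussianPDFReal_nonneg _ _ _)]
  congr 1
  simp only [gaussianPDFReal, sub_zero, NNReal.coe_one, mul_one]
  rw [mul_mul_mul_comm, ← Real.exp_add, mul_mul_mul_comm, ← Real.exp_add]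
  congr 1
  have : (a * x + b * y) ^ 2 + (-b * x + a * y) ^ 2 = x ^ 2 + y ^ 2 := by
    linear_combination (x ^ 2 + y ^ 2) * h
  field_simp
  congr 1; linarith [this]


lemma rotL_gauss (a b : ℝ) (h : a ^ 2 + b ^ 2 = 1) :
    MeasurePreserving (rotL a b h) ((gaussianReal 0 1).prod (gaussianReal 0 1))
      ((gaussianReal 0 1).prod (gaussianReal 0 1)) := by
  refine ⟨rotL_measurable a b h, ?_⟩
  have hemb : MeasurableEmbedding (rotL a b h) :=
    ((rotL a b h).toContinuousLinearEquiv.toHomeomorph.toMeasurableEquiv).measurableEmbedding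
  ext s hs
  rw [Measure.map_apply (rotL_measurable a b h) hs, gauss_prod_eq,
    withDensity_apply _ (rotL_measurable a b h hs), withDensity_apply _ hs]
  have hD : Measurable fun p : ℝ × ℝ => gaussianPDF 0 1 p.1 * gaussianPDF 0 1 p.2 := by
    exact ((measurable_gaussianPDF 0 1).comp measurable_fst).mul
      ((measurable_gaussianPDF 0 1).comp measurable_snd)
  calc ∫⁻ p in (rotL a b h) ⁻¹' s, gaussianPDF 0 1 p.1 * gaussianPDF 0 1 p.2 ∂volume
      = ∫⁻ p in (rotL a b h) ⁻¹' s,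
          (fun q : ℝ × ℝ => gaussianPDF 0 1 q.1 * gaussianPDF 0 1 q.2) (rotL a b h p) ∂volume := by
        refine setLIntegral_congr_fun (rotL_measurable a b h hs) ?_
        intro p _
        simp only [rotL_apply]
        exact (gaussianPDF_rot a b p.1 p.2 h).symm
    _ = ∫⁻ q in s, gaussianPDF 0 1 q.1 * gaussianPDF 0 1 q.2 ∂volume :=
        (rotL_volume a b h).setLIntegral_comp_preimage_emb hemb
          (fun q : ℝ × ℝ => gaussianPDF 0 1 q.1 * gaussianPDF 0 1 q.2) s

end SubaddAux

namespace SubaddAux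

variable {n : ℕ}

lemma stdGaussian_prod_eq (n : ℕ) :
    (stdGaussian n).prod (stdGaussian n) =
      Measure.map (MeasurableEquiv.arrowProdEquivProdArrow ℝ ℝ (Fin n))
        (Measure.pi fun _ : Fin n => (gaussianReal 0 1).prod (gaussianReal 0 1)) :=
  ((measurePreserving_arrowProdEquivProdArrow ℝ ℝ (Fin n) (fun _ => gaussianReal 0 1)
    (fun _ => gaussianReal 0 1)).map_eq).symm

lemma he_mp (n : ℕ) :
    MeasurePreserving (MeasurableEquiv.arrowProdEquivProdArrow ℝ ℝ (Fin n))
      (Measure.pi fun _ : Fin n => (gaussianReal 0 1).prod (gaussianReal 0 1))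
      ((stdGaussian n).prod (stdGaussian n)) :=
  measurePreserving_arrowProdEquivProdArrow ℝ ℝ (Fin n) (fun _ => gaussianReal 0 1)
    (fun _ => gaussianReal 0 1)

lemma rotE_mp (n : ℕ) (a b : ℝ) (h : a ^ 2 + b ^ 2 = 1) :
    MeasurePreserving
      (fun p : (Fin n → ℝ) × (Fin n → ℝ) =>
        ((fun i => a * p.1 i + b * p.2 i : Fin n → ℝ),
          (fun i => -b * p.1 i + a * p.2 i : Fin n → ℝ)))
      ((stdGaussian n).prod (stdGaussian n)) ((stdGaussian n).prod (stdGaussian n)) := by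
  set e := MeasurableEquiv.arrowProdEquivProdArrow ℝ ℝ (Fin n) with he_def
  have hpi : MeasurePreserving (fun (f : Fin n → ℝ × ℝ) (i : Fin n) => rotL a b h (f i))
      (Measure.pi fun _ : Fin n => (gaussianReal 0 1).prod (gaussianReal 0 1))
      (Measure.pi fun _ : Fin n => (gaussianReal 0 1).prod (gaussianReal 0 1)) :=
    measurePreserving_pi _ _ (fun _ => rotL_gauss a b h)
  have comp := (he_mp n).comp (hpi.comp ((he_mp n).symm e))
  have hfun : (⇑e ∘ (fun (f : Fin n → ℝ × ℝ) (i : Fin n) => rotL a b h (f i)) ∘ ⇑e.symm) =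
      (fun p : (Fin n → ℝ) × (Fin n → ℝ) =>
        ((fun i => a * p.1 i + b * p.2 i : Fin n → ℝ),
          (fun i => -b * p.1 i + a * p.2 i : Fin n → ℝ))) := by
    funext p
    simp [he_def, MeasurableEquiv.arrowProdEquivProdArrow, Equiv.arrowProdEquivProdArrow,
      Function.comp]
  rw [hfun] at comp
  exact comp

end SubaddAux

namespace SubaddAux

instance stdGaussian_prob (n : ℕ) : IsProbabilityMeasure (stdGaussian n) := by
  unfold _root_.stdGaussian; infer_instance

lemma measurable_pair (n : ℕ) (a b : ℝ) :
    Measurable (fun p : (Fin n → ℝ) × (Fin n → ℝ) =>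
      ((p.1, fun i => a * p.1 i + b * p.2 i) : (Fin n → ℝ) × (Fin n → ℝ))) := by
  fun_prop

lemma neg_mp (n : ℕ) :
    MeasurePreserving (fun p : (Fin n → ℝ) × (Fin n → ℝ) => (p.1, fun i => -p.2 i))
      ((stdGaussian n).prod (stdGaussian n)) ((stdGaussian n).prod (stdGaussian n)) := by
  have h1 : MeasurePreserving (fun x : ℝ => -x) (gaussianReal 0 1) (gaussianReal 0 1) := by
    constructor
    · fun_prop
    · have := gaussianReal_map_const_mul (μ := 0) (v := 1) (-1)
      simp only [mul_zero, neg_mul, one_mul] at this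
      have hv : ((⟨(-1 : ℝ) ^ 2, sq_nonneg _⟩ : ℝ≥0) * 1) = 1 := by
        ext; norm_num
      rw [show (NNReal.mk ((-1 : ℝ) ^ 2) (sq_nonneg _) * 1 : ℝ≥0) = 1 by ext; norm_num] at this
      convert this using 2
  have hneg : MeasurePreserving (fun x : Fin n → ℝ => fun i => -x i)
      (stdGaussian n) (stdGaussian n) :=
    measurePreserving_pi _ _ (fun _ => h1)
  exact (MeasurePreserving.id (stdGaussian n)).prod hneg

lemma map_pair_eq_nonneg (n : ℕ) (a b : ℝ) (h : a ^ 2 + b ^ 2 = 1) (hb : 0 ≤ b) :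
    Measure.map (fun p : (Fin n → ℝ) × (Fin n → ℝ) =>
        ((p.1, fun i => a * p.1 i + b * p.2 i) : (Fin n → ℝ) × (Fin n → ℝ)))
      ((stdGaussian n).prod (stdGaussian n)) = jointGaussian n a := by
  have hs : Real.sqrt (1 - a ^ 2) = b := by
    rw [show (1 : ℝ) - a ^ 2 = b ^ 2 by linarith, Real.sqrt_sq hb]
  rw [jointGaussian, hs]

lemma map_pair_eq (n : ℕ) (a b : ℝ) (h : a ^ 2 + b ^ 2 = 1) :
    Measure.map (fun p : (Fin n → ℝ) × (Fin n → ℝ) =>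
        ((p.1, fun i => a * p.1 i + b * p.2 i) : (Fin n → ℝ) × (Fin n → ℝ)))
      ((stdGaussian n).prod (stdGaussian n)) = jointGaussian n a := by
  rcases le_or_gt 0 b with hb | hb
  · exact map_pair_eq_nonneg n a b h hb
  · have h' : a ^ 2 + (-b) ^ 2 = 1 := by linarith [neg_sq b ▸ h]
    have hcomp : (fun p : (Fin n → ℝ) × (Fin n → ℝ) =>
        ((p.1, fun i => a * p.1 i + b * p.2 i) : (Fin n → ℝ) × (Fin n → ℝ))) =
        (fun p : (Fin n → ℝ) × (Fin n → ℝ) =>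
          ((p.1, fun i => a * p.1 i + (-b) * p.2 i) : (Fin n → ℝ) × (Fin n → ℝ))) ∘
        (fun p : (Fin n → ℝ) × (Fin n → ℝ) => (p.1, fun i => -p.2 i)) := by
      funext p
      simp only [Function.comp]
      refine Prod.ext rfl ?_
      funext i
      dsimp
      ring
    rw [hcomp, ← Measure.map_map (measurable_pair n a (-b)) (neg_mp n).measurable,
      (neg_mp n).map_eq]
    exact map_pair_eq_nonneg n a (-b) h' (by linarith)

end SubaddAux

namespace SubaddAux

/-- the interpolating Gaussian vector -/
def W (n : ℕ) (α : ℝ) (p : (Fin n → ℝ) × (Fin n → ℝ)) : Fin n → ℝ :=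
  fun i => Real.cos α * p.1 i + Real.sin α * p.2 i

lemma measurable_W_pair (n : ℕ) (α β : ℝ) :
    Measurable (fun p : (Fin n → ℝ) × (Fin n → ℝ) => (W n α p, W n β p)) := by
  unfold W; fun_prop

lemma map_W_pair (n : ℕ) (α β : ℝ) :
    Measure.map (fun p : (Fin n → ℝ) × (Fin n → ℝ) => (W n α p, W n β p))
      ((stdGaussian n).prod (stdGaussian n)) = jointGaussian n (Real.cos (β - α)) := by
  have h1 : Real.cos α ^ 2 + Real.sin α ^ 2 = 1 := by
    rw [add_comm]; exact Real.sin_sq_add_cos_sq α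
  have h2 : Real.cos (β - α) ^ 2 + Real.sin (β - α) ^ 2 = 1 := by
    rw [add_comm]; exact Real.sin_sq_add_cos_sq (β - α)
  have hfun : (fun p : (Fin n → ℝ) × (Fin n → ℝ) => (W n α p, W n β p)) =
      (fun q : (Fin n → ℝ) × (Fin n → ℝ) =>
        ((q.1, fun i => Real.cos (β - α) * q.1 i + Real.sin (β - α) * q.2 i) :
          (Fin n → ℝ) × (Fin n → ℝ))) ∘
      (fun p : (Fin n → ℝ) × (Fin n → ℝ) =>
        ((fun i => Real.cos α * p.1 i + Real.sin α * p.2 i : Fin n → ℝ),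
          (fun i => -Real.sin α * p.1 i + Real.cos α * p.2 i : Fin n → ℝ))) := by
    funext p
    refine Prod.ext rfl ?_
    funext i
    show Real.cos β * p.1 i + Real.sin β * p.2 i = _
    have hc : Real.cos β = Real.cos (β - α) * Real.cos α - Real.sin (β - α) * Real.sin α := by
      rw [← Real.cos_add, sub_add_cancel]
    have hs : Real.sin β = Real.sin (β - α) * Real.cos α + Real.cos (β - α) * Real.sin α := by
      rw [← Real.sin_add, sub_add_cancel]
    simp only [Function.comp_apply]
    rw [hc, hs]
    ring
  rw [hfun, ← Measure.map_map (measurable_pair n (Real.cos (β - α)) (Real.sin (β - α)))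
      (rotE_mp n (Real.cos α) (Real.sin α) h1).measurable,
    (rotE_mp n (Real.cos α) (Real.sin α) h1).map_eq,
    map_pair_eq n (Real.cos (β - α)) (Real.sin (β - α)) h2]

end SubaddAux


/-- for measurable A with γₙ(A) = 1/2, 0 < ρ < 1, k ≥ 1 and
θ = cos(k·arccos ρ) with θ > -1, one has
P_θ(X ∈ A, Y ∉ A) ≤ k·P_ρ(X ∈ A, Y ∉ A). -/
theorem subadditivity_noise_sensitivity (n : ℕ) (A : Set (Fin n → ℝ))
    (hA : MeasurableSet A) (hAvol : stdGaussian n A = 1 / 2)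
    (ρ : ℝ) (hρ : ρ ∈ Set.Ioo (0 : ℝ) 1) (k : ℕ) (hk : 1 ≤ k)
    (θ : ℝ) (hθ : θ = Real.cos (k * Real.arccos ρ)) (hθ1 : -1 < θ) :
    jointGaussian n θ (A ×ˢ Aᶜ) ≤ k * jointGaussian n ρ (A ×ˢ Aᶜ) := by
  obtain ⟨hρ0, hρ1⟩ := hρ
  set g := Real.arccos ρ with hg
  have hcosg : Real.cos g = ρ := Real.cos_arccos (by linarith) (by linarith)
  have hAA : MeasurableSet (A ×ˢ Aᶜ) := hA.prod hA.compl
  set γγ := (stdGaussian n).prod (stdGaussian n) with hγγ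
  have happ : ∀ α β : ℝ, jointGaussian n (Real.cos (β - α)) (A ×ˢ Aᶜ) =
      γγ ((fun p => (SubaddAux.W n α p, SubaddAux.W n β p)) ⁻¹' (A ×ˢ Aᶜ)) := by
    intro α β
    rw [← SubaddAux.map_W_pair n α β, Measure.map_apply (SubaddAux.measurable_W_pair n α β) hAA]
  have hθ' : jointGaussian n θ (A ×ˢ Aᶜ) =
      γγ ((fun p => (SubaddAux.W n 0 p, SubaddAux.W n ((k : ℝ) * g) p)) ⁻¹' (A ×ˢ Aᶜ)) := by
    have hθ2 : θ = Real.cos ((k : ℝ) * g - 0) := by rw [sub_zero, hθ]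
    rw [hθ2, happ 0 ((k : ℝ) * g)]
  have hstep : ∀ j : ℕ, jointGaussian n ρ (A ×ˢ Aᶜ) =
      γγ ((fun p => (SubaddAux.W n ((j : ℝ) * g) p, SubaddAux.W n (((j : ℝ) + 1) * g) p)) ⁻¹' (A ×ˢ Aᶜ)) := by
    intro j
    have hρ2 : ρ = Real.cos ((((j : ℝ) + 1) * g) - ((j : ℝ) * g)) := by
      rw [show (((j : ℝ) + 1) * g) - ((j : ℝ) * g) = g by ring, hcosg]
    conv_lhs => rw [hρ2]
    exact happ _ _
  have hsub : ((fun p => (SubaddAux.W n 0 p, SubaddAux.W n ((k : ℝ) * g) p)) ⁻¹' (A ×ˢ Aᶜ)) ⊆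
      ⋃ j ∈ Finset.range k,
        ((fun p => (SubaddAux.W n ((j : ℝ) * g) p, SubaddAux.W n (((j : ℝ) + 1) * g) p)) ⁻¹' (A ×ˢ Aᶜ)) := by
    intro p hp
    simp only [Set.mem_preimage, Set.mem_prod, Set.mem_compl_iff] at hp
    by_contra hcon
    simp only [Set.mem_iUnion, Set.mem_preimage, Set.mem_prod, Set.mem_compl_iff,
      Finset.mem_range, not_exists, not_and, not_not, exists_prop] at hcon
    have hall : ∀ j : ℕ, j ≤ k → SubaddAux.W n ((j : ℝ) * g) p ∈ A := by
      intro j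
      induction j with
      | zero =>
        intro _
        have h0 : ((0 : ℕ) : ℝ) * g = 0 := by norm_num
        rw [h0]
        exact hp.1
      | succ j ih =>
        intro hj
        have hj' : j < k := lt_of_lt_of_le (Nat.lt_succ_self j) hj
        have hmem := hcon j hj' (ih (le_of_lt hj'))
        have hc : ((j + 1 : ℕ) : ℝ) = (j : ℝ) + 1 := by push_cast; ring
        rw [hc]
        exact hmem
    exact hp.2 (hall k le_rfl)
  calc jointGaussian n θ (A ×ˢ Aᶜ)
      = γγ ((fun p => (SubaddAux.W n 0 p, SubaddAux.W n ((k : ℝ) * g) p)) ⁻¹' (A ×ˢ Aᶜ)) := hθ'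
    _ ≤ γγ (⋃ j ∈ Finset.range k,
        ((fun p => (SubaddAux.W n ((j : ℝ) * g) p, SubaddAux.W n (((j : ℝ) + 1) * g) p)) ⁻¹' (A ×ˢ Aᶜ))) :=
        measure_mono hsub
    _ ≤ ∑ j ∈ Finset.range k,
        γγ ((fun p => (SubaddAux.W n ((j : ℝ) * g) p, SubaddAux.W n (((j : ℝ) + 1) * g) p)) ⁻¹' (A ×ˢ Aᶜ)) :=
        measure_biUnion_finset_le _ _
    _ = ∑ _j ∈ Finset.range k, jointGaussian n ρ (A ×ˢ Aᶜ) := by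
        exact Finset.sum_congr rfl fun j _ => (hstep j).symm
    _ = k * jointGaussian n ρ (A ×ˢ Aᶜ) := by
        rw [Finset.sum_const, Finset.card_range, nsmul_eq_mul]
end
end
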